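/- arXiv:2605.17232 — 2 statements merged into one kernel-verified Lean document; each statement's English description precedes it below -/
import Mathlib

section
/- Define the Bregman divergence D(s, t) = s·log(s/t) + t - s generated by φ(a) = a·log a - a. For all s > 0 and t ∈ [s/2, 3s/2], one has (s/2)·(1 - t/s)² ≤ D(s, t) + (2/3)·|s - t|³/s². -/
lemma neg_log_series_bound (u : ℝ) (h1 : -(1/2) ≤ u) (h2 : u ≤ 1/2) :
    u + u^2/2 - (2/3) * |u|^3 ≤ -Real.log (1 - u) := by
  have h := Real.abs_log_sub_add_sum_range_le (x := u) (by rw [abs_lt]; constructor <;> linarith) 5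
  simp only [Finset.sum_range_succ, Finset.sum_range_zero] at h
  norm_num at h
  have habs6 : |u|^6 = u^6 := by rw [← abs_pow]; exact abs_of_nonneg (by positivity)
  have habs' : |u| ≤ 1/2 := abs_le.mpr ⟨h1, h2⟩
  have hb : |u|^6 / (1 - |u|) ≤ 2 * u^6 := by
    rw [div_le_iff₀ (by linarith)]
    nlinarith [abs_nonneg u, pow_nonneg (abs_nonneg u) 6]
  rw [abs_le] at h
  have hlog : Real.log (1-u) ≤ 2*u^6 - (u + u^2/2 + u^3/3 + u^4/4 + u^5/5) := by
    have := h.2; linarith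
  rcases le_or_gt 0 u with hpos | hneg
  · rw [abs_of_nonneg hpos]
    have hcube : u^3 ≤ 1/8 := by nlinarith
    have key : u^3/3 + u^4/4 + u^5/5 - 2*u^6 + (2/3)*u^3 ≥ 0 := by
      nlinarith [pow_nonneg hpos 3, pow_nonneg hpos 4, pow_nonneg hpos 5,
        mul_nonneg (pow_nonneg hpos 3) (by linarith : (0:ℝ) ≤ 1/8 - u^3)]
    linarith
  · rw [abs_of_neg hneg]
    have hv0 : 0 ≤ -u := by linarith
    have hinner : 1/3 + (-u)/4 - (-u)^2/5 - 2*(-u)^3 ≥ 0 := by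
      nlinarith [sq_nonneg u, sq_nonneg (u + 1/2)]
    have key : (-u)^3/3 + (-u)^4/4 - (-u)^5/5 - 2*(-u)^6 ≥ 0 := by
      nlinarith [mul_nonneg (pow_nonneg hv0 3) hinner]
    nlinarith [key, hlog]

lemma key_log_bound (x : ℝ) (hx1 : 1/2 ≤ x) (hx2 : x ≤ 3/2) :
    (1/2) * (1-x)^2 ≤ -Real.log x + x - 1 + (2/3) * |1-x|^3 := by
  have h := neg_log_series_bound (1-x) (by linarith) (by linarith)
  have hx : 1 - (1-x) = x := by ring
  rw [hx] at h
  nlinarith [h]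

theorem stmt_1 (s t : ℝ) (hs : 0 < s) (ht : t ∈ Set.Icc (s/2) (3*s/2)) :
    (s/2) * (1 - t/s)^2 ≤ (s * Real.log (s/t) + t - s) + (2/3) * |s - t|^3 / s^2 := by
  obtain ⟨ht1, ht2⟩ := ht
  have ht0 : 0 < t := lt_of_lt_of_le (by linarith) ht1
  have hx1 : 1/2 ≤ t/s := by rw [le_div_iff₀ hs]; linarith
  have hx2 : t/s ≤ 3/2 := by rw [div_le_iff₀ hs]; linarith
  have key := key_log_bound (t/s) hx1 hx2
  have hlog : Real.log (s/t) = -Real.log (t/s) := by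
    rw [← Real.log_inv]; congr 1; field_simp
  have habs : |s - t| = s * |1 - t/s| := by
    have h1 : s * (1 - t/s) = s - t := by field_simp
    rw [← h1, abs_mul, abs_of_pos hs]
  have habs3 : |s - t|^3 = s^3 * |1 - t/s|^3 := by rw [habs, mul_pow]
  rw [hlog, habs3]
  have hmul := mul_le_mul_of_nonneg_left key hs.le
  have hxs : t/s * s = t := div_mul_cancel₀ t hs.ne'
  have h2 : (2:ℝ)/3 * (s^3 * |1 - t/s|^3) / s^2 = s * ((2/3) * |1 - t/s|^3) := by
    field_simp
  rw [h2]
  nlinarith [hmul, hxs]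
end

section
/- Let p_t be the time-T marginal of the factorized uniform-rate forward CTMC on [S]^d started from any initial distribution, and let π^⊗d be the product of uniform distributions on [S]. Then TV(p_T, π^⊗d) ≤ d·exp(-∫_0^T β(s) ds), independently of S. -/
open Finset

lemma tv_prod_le (S : ℕ) : ∀ (n : ℕ) (a b : Fin n → Fin S → ℝ),
    (∀ i w, 0 ≤ a i w) → (∀ i, ∑ w, a i w = 1) →
    (∀ i w, 0 ≤ b i w) → (∀ i, ∑ w, b i w = 1) →
    ∑ x : Fin n → Fin S, |(∏ i, a i (x i)) - ∏ i, b i (x i)| ≤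
      ∑ i, ∑ w, |a i w - b i w| := by
  intro n
  induction n with
  | zero =>
    intro a b _ _ _ _
    simp
  | succ n ih =>
    intro a b ha ha1 hb hb1
    have key : ∑ x : Fin (n+1) → Fin S, |(∏ i, a i (x i)) - ∏ i, b i (x i)|
        = ∑ p : Fin S × (Fin n → Fin S),
          |a 0 p.1 * (∏ i : Fin n, a i.succ (p.2 i))
            - b 0 p.1 * (∏ i : Fin n, b i.succ (p.2 i))| := by
      refine Fintype.sum_equiv (Fin.consEquiv fun _ : Fin (n+1) => Fin S).symm
        (fun x => |(∏ i, a i (x i)) - ∏ i, b i (x i)|)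
        (fun p => |a 0 p.1 * (∏ i : Fin n, a i.succ (p.2 i))
            - b 0 p.1 * (∏ i : Fin n, b i.succ (p.2 i))|) ?_
      intro x
      simp only [Fin.consEquiv, Equiv.coe_fn_symm_mk]
      rw [Fin.prod_univ_succ (fun i => a i (x i)), Fin.prod_univ_succ (fun i => b i (x i))]
      rfl
    rw [key, Fintype.sum_prod_type]
    have hstep : ∀ (w : Fin S) (y : Fin n → Fin S),
        |a 0 w * (∏ i : Fin n, a i.succ (y i)) - b 0 w * (∏ i : Fin n, b i.succ (y i))|
        ≤ a 0 w * |(∏ i : Fin n, a i.succ (y i)) - ∏ i : Fin n, b i.succ (y i)|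
          + |a 0 w - b 0 w| * (∏ i : Fin n, b i.succ (y i)) := by
      intro w y
      have : a 0 w * (∏ i : Fin n, a i.succ (y i)) - b 0 w * (∏ i : Fin n, b i.succ (y i))
          = a 0 w * ((∏ i : Fin n, a i.succ (y i)) - ∏ i : Fin n, b i.succ (y i))
            + (a 0 w - b 0 w) * (∏ i : Fin n, b i.succ (y i)) := by ring
      rw [this]
      refine (abs_add_le _ _).trans ?_
      rw [abs_mul, abs_mul, abs_of_nonneg (ha 0 w),
        abs_of_nonneg (Finset.prod_nonneg fun i _ => hb i.succ (y i))]
    calc ∑ w : Fin S, ∑ y : Fin n → Fin S,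
          |a 0 w * (∏ i : Fin n, a i.succ (y i)) - b 0 w * (∏ i : Fin n, b i.succ (y i))|
        ≤ ∑ w : Fin S, ∑ y : Fin n → Fin S,
          (a 0 w * |(∏ i : Fin n, a i.succ (y i)) - ∏ i : Fin n, b i.succ (y i)|
          + |a 0 w - b 0 w| * (∏ i : Fin n, b i.succ (y i))) := by
          exact Finset.sum_le_sum fun w _ => Finset.sum_le_sum fun y _ => hstep w y
      _ = (∑ w : Fin S, a 0 w) *
            (∑ y : Fin n → Fin S, |(∏ i : Fin n, a i.succ (y i)) - ∏ i : Fin n, b i.succ (y i)|)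
          + (∑ w : Fin S, |a 0 w - b 0 w|) *
            (∑ y : Fin n → Fin S, ∏ i : Fin n, b i.succ (y i)) := by
          simp [Finset.sum_add_distrib, ← Finset.mul_sum, ← Finset.sum_mul]
      _ ≤ 1 * (∑ i : Fin n, ∑ w, |a i.succ w - b i.succ w|)
          + (∑ w : Fin S, |a 0 w - b 0 w|) * 1 := by
          have hsum : ∑ y : Fin n → Fin S, ∏ i : Fin n, b i.succ (y i) = 1 := by
            rw [← Fintype.piFinset_univ, Finset.sum_prod_piFinset]
            simp [hb1]
          rw [ha1 0, hsum]
          have := ih (fun i => a i.succ) (fun i => b i.succ)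
            (fun i w => ha i.succ w) (fun i => ha1 i.succ)
            (fun i w => hb i.succ w) (fun i => hb1 i.succ)
          linarith
      _ = ∑ i : Fin (n+1), ∑ w, |a i w - b i w| := by
          rw [Fin.sum_univ_succ]; ring

/-- S-independent prior mismatch bound under the uniform rate:
`TV(p_T, π^{⊗d}) ≤ d exp(-∫₀ᵀ β)`, where `p_T` is obtained from the initial
distribution by applying the per-coordinate uniform-rate transition kernel
`K(v,w) = ρ 1[v=w] + (1-ρ)/S` with `ρ = exp(-∫₀ᵀ β)` independently in each
of the `d` coordinates. -/
theorem stmt_16 (S d : ℕ) (hS : 0 < S)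
    (T : ℝ) (hT : 0 ≤ T) (β : ℝ → ℝ)
    (hβ : ∀ t ∈ Set.Icc (0:ℝ) T, 0 ≤ β t)
    (hβint : MeasureTheory.IntegrableOn β (Set.Icc 0 T))
    (ρ : ℝ) (hρ : ρ = Real.exp (-∫ s in (0:ℝ)..T, β s))
    (p0 : (Fin d → Fin S) → ℝ)
    (hp0 : ∀ x, 0 ≤ p0 x) (hp01 : ∑ x, p0 x = 1)
    (pT : (Fin d → Fin S) → ℝ)
    (hpT : ∀ x, pT x = ∑ x0, p0 x0 *
      ∏ i, (ρ * (if x0 i = x i then 1 else 0) + (1 - ρ) / S)) :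
    (1/2) * ∑ x, |pT x - ((1:ℝ)/S)^d| ≤ d * ρ := by
  have hSR : (0:ℝ) < S := Nat.cast_pos.mpr hS
  have hρ0 : 0 ≤ ρ := by rw [hρ]; positivity
  have hρ1 : ρ ≤ 1 := by
    rw [hρ]
    have hint : 0 ≤ ∫ s in (0:ℝ)..T, β s := by
      apply intervalIntegral.integral_nonneg hT
      intro u hu; exact hβ u hu
    calc Real.exp (-∫ s in (0:ℝ)..T, β s) ≤ Real.exp 0 :=
          Real.exp_le_exp.mpr (by linarith)
      _ = 1 := Real.exp_zero
  set c : ℝ := (1 - ρ) / S with hc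
  have hc0 : 0 ≤ c := div_nonneg (by linarith) hSR.le
  have h1S : (1:ℝ)/S ≤ 1 := by
    rw [div_le_one hSR]; exact_mod_cast hS
  -- per-coordinate TV bound
  have hrow : ∀ v : Fin S, ∑ w : Fin S, |(ρ * (if v = w then 1 else 0) + c) - 1/S| ≤ 2 * ρ := by
    intro v
    have h1 : ∀ w : Fin S, |(ρ * (if v = w then 1 else 0) + c) - 1/S|
        = ρ / S + (if v = w then ρ * (1 - 1/S) - ρ / S else 0) := by
      intro w
      have he : ρ + c - 1/S = ρ * (1 - 1/S) := by
        rw [hc]; field_simp; ring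
      have he2 : c - 1/S = -(ρ/S) := by rw [hc]; field_simp; ring
      by_cases h : v = w
      · rw [if_pos h, if_pos h, mul_one, he,
          abs_of_nonneg (mul_nonneg hρ0 (by linarith))]
        ring
      · rw [if_neg h, if_neg h, mul_zero, zero_add, he2, abs_neg,
          abs_of_nonneg (by positivity)]
        ring
    calc ∑ w : Fin S, |(ρ * (if v = w then 1 else 0) + c) - 1/S|
        = ∑ w : Fin S, (ρ / S + (if v = w then ρ * (1 - 1/S) - ρ / S else 0)) := by
          exact Finset.sum_congr rfl fun w _ => h1 w
      _ = S * (ρ / S) + (ρ * (1 - 1/S) - ρ / S) := by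
          rw [Finset.sum_add_distrib, Finset.sum_ite_eq Finset.univ v
            (fun _ => ρ * (1 - 1/S) - ρ / S)]
          simp [Finset.card_univ]
      _ ≤ 2 * ρ := by
          have : (S:ℝ) * (ρ / S) = ρ := by field_simp
          rw [this]
          have h2 : 0 ≤ ρ / S := by positivity
          have h3 : ρ * (1 - 1/(S:ℝ)) - ρ/S = ρ - 2*(ρ/S) := by ring
          linarith
  have hrowsum : ∀ v : Fin S, ∑ w : Fin S, (ρ * (if v = w then 1 else 0) + c) = 1 := by
    intro v
    rw [Finset.sum_add_distrib, ← Finset.mul_sum,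
      Finset.sum_ite_eq Finset.univ v (fun _ => (1:ℝ))]
    simp only [Finset.mem_univ, if_pos, Finset.sum_const, Finset.card_univ, Fintype.card_fin,
      nsmul_eq_mul, mul_one]
    rw [hc]; field_simp; ring
  have hnn : ∀ (v w : Fin S), 0 ≤ ρ * (if v = w then 1 else 0) + c := by
    intro v w; positivity
  have hb1 : ∑ _w : Fin S, (1:ℝ)/S = 1 := by
    simp [Finset.card_univ]
    field_simp
  have hprod : ∀ x0 : Fin d → Fin S,
      ∑ x : Fin d → Fin S,
        |(∏ i, (ρ * (if x0 i = x i then 1 else 0) + c)) - ((1:ℝ)/S)^d| ≤ 2 * d * ρ := by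
    intro x0
    have h := tv_prod_le S d (fun i w => ρ * (if x0 i = w then 1 else 0) + c)
      (fun _ _ => (1:ℝ)/S) (fun i w => hnn (x0 i) w) (fun i => hrowsum (x0 i))
      (fun _ w => by positivity) (fun _ => hb1)
    calc ∑ x : Fin d → Fin S,
          |(∏ i, (ρ * (if x0 i = x i then 1 else 0) + c)) - ((1:ℝ)/S)^d|
        = ∑ x : Fin d → Fin S,
          |(∏ i, (ρ * (if x0 i = x i then 1 else 0) + c)) - ∏ _i : Fin d, (1:ℝ)/S| := by
          simp
      _ ≤ ∑ i : Fin d, ∑ w, |(ρ * (if x0 i = w then 1 else 0) + c) - 1/S| := h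
      _ ≤ ∑ _i : Fin d, 2 * ρ := Finset.sum_le_sum fun i _ => hrow (x0 i)
      _ = 2 * d * ρ := by simp [Finset.card_univ]; ring
  -- combine
  have hmain : ∑ x, |pT x - ((1:ℝ)/S)^d| ≤ 2 * d * ρ := by
    have hdecomp : ∀ x, pT x - ((1:ℝ)/S)^d
        = ∑ x0, p0 x0 * ((∏ i, (ρ * (if x0 i = x i then 1 else 0) + c)) - ((1:ℝ)/S)^d) := by
      intro x
      have : ∑ x0, p0 x0 * ((∏ i, (ρ * (if x0 i = x i then 1 else 0) + c)) - ((1:ℝ)/S)^d)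
          = (∑ x0, p0 x0 * ∏ i, (ρ * (if x0 i = x i then 1 else 0) + c))
            - (∑ x0, p0 x0) * ((1:ℝ)/S)^d := by
        rw [Finset.sum_mul, ← Finset.sum_sub_distrib]
        exact Finset.sum_congr rfl fun x0 _ => by ring
      rw [this, hp01, one_mul, ← hpT x]
    calc ∑ x, |pT x - ((1:ℝ)/S)^d|
        ≤ ∑ x : Fin d → Fin S, ∑ x0 : Fin d → Fin S, p0 x0 *
            |(∏ i, (ρ * (if x0 i = x i then 1 else 0) + c)) - ((1:ℝ)/S)^d| := by
          refine Finset.sum_le_sum fun x _ => ?_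
          rw [hdecomp x]
          refine (Finset.abs_sum_le_sum_abs _ _).trans ?_
          refine Finset.sum_le_sum fun x0 _ => ?_
          rw [abs_mul, abs_of_nonneg (hp0 x0)]
      _ = ∑ x0 : Fin d → Fin S, p0 x0 * ∑ x : Fin d → Fin S,
            |(∏ i, (ρ * (if x0 i = x i then 1 else 0) + c)) - ((1:ℝ)/S)^d| := by
          rw [Finset.sum_comm]
          exact Finset.sum_congr rfl fun x0 _ => by rw [Finset.mul_sum]
      _ ≤ ∑ x0, p0 x0 * (2 * d * ρ) := by
          refine Finset.sum_le_sum fun x0 _ => ?_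
          exact mul_le_mul_of_nonneg_left (hprod x0) (hp0 x0)
      _ = 2 * d * ρ := by rw [← Finset.sum_mul, hp01, one_mul]
  linarith
end
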